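/- arXiv:2004.06944 — 4 statements merged into one kernel-verified Lean document; each statement's English description precedes it below -/
import Mathlib

section
/- Let J and K be skew-symmetric real N×N matrices, let S : ℝᴺ → ℝ be continuously differentiable, and let Z : ℝ² × ℝ → ℝᴺ be a smooth (C²) map, 2π-periodic in its third argument s, such that for every (x,y,s) one has J·∂_x Z + K·∂_y Z = ∇S(Z) (a loop of steady solutions of the multisymplectic system). Define the fluxes B(x,y) = (1/2π)∫₀^{2π} ½⟨J·∂_s Z, Z⟩ ds and A(x,y) = (1/2π)∫₀^{2π} ½⟨K·∂_s Z, Z⟩ ds. Then ∂_x B + ∂_y A = 0 at every point (x,y); i.e., loops of steady solutions carry an exact planar conservation law. -/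
/-!
The flux density `½⟪J Z_s, Z⟫` is the pullback along `Z`, evaluated on `∂_s`, of the 1-form
`λ_z(u) = ½⟪J u, z⟫` (`liouvilleForm`), whose exterior derivative is, since `J` is skew, the
constant 2-form `(u, w) ↦ ⟪J w, u⟫`. Hence `∂_x ½⟪J Z_s, Z⟫ = ∂_s ½⟪J Z_x, Z⟫ + ⟪J Z_s, Z_x⟫`,
and the exact term integrates to zero over a period. Adding the analogous identity for `K` and
`y`, the steady equation `J Z_x + K Z_y = ∇S(Z)` turns what remains into
`-⟪∇S(Z), Z_s⟫ = -∂_s S(Z)`, which also integrates to zero over a period.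
-/

open RealInnerProductSpace Matrix Function

theorem Matrix.inner_toEuclideanLin_eq_neg {n : Type*} [Fintype n] [DecidableEq n]
    {M : Matrix n n ℝ} (hM : Mᵀ = -M) (u v : EuclideanSpace ℝ n) :
    ⟪toEuclideanLin M u, v⟫ = -⟪u, toEuclideanLin M v⟫ := by
  rw [← LinearMap.adjoint_inner_right, ← toEuclideanLin_conjTranspose_eq_adjoint,
    conjTranspose_eq_transpose_of_trivial, hM, map_neg, LinearMap.neg_apply, inner_neg_right]

section Slices

variable {F : Type*} [NormedAddCommGroup F] [NormedSpace ℝ F] {f : ℝ × ℝ → F}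

theorem DifferentiableAt.hasDerivAt_slice_fst {t s : ℝ} (hf : DifferentiableAt ℝ f (t, s)) :
    HasDerivAt (fun t => f (t, s)) (fderiv ℝ f (t, s) (1, 0)) t :=
  hf.hasFDerivAt.comp_hasDerivAt t ((hasDerivAt_id t).prodMk (hasDerivAt_const t s))

theorem DifferentiableAt.hasDerivAt_slice_snd {t s : ℝ} (hf : DifferentiableAt ℝ f (t, s)) :
    HasDerivAt (fun s => f (t, s)) (fderiv ℝ f (t, s) (0, 1)) s :=
  hf.hasFDerivAt.comp_hasDerivAt s ((hasDerivAt_const s t).prodMk (hasDerivAt_id s))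

theorem hasDerivAt_intervalIntegral_of_contDiff (hf : ContDiff ℝ 1 f) (a b t : ℝ) :
    HasDerivAt (fun t => ∫ s in a..b, f (t, s)) (∫ s in a..b, fderiv ℝ f (t, s) (1, 0)) t := by
  have hf' : Continuous fun p => fderiv ℝ f p (1, 0) :=
    (hf.continuous_fderiv one_ne_zero).clm_apply continuous_const
  have hslice : ∀ t, Continuous fun s => f (t, s) := fun t =>
    hf.continuous.comp (Continuous.prodMk_right t)
  obtain ⟨C, hC⟩ := ((isCompact_closedBall t 1).prod isCompact_uIcc).exists_bound_of_continuousOn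
    hf'.continuousOn
  refine (intervalIntegral.hasDerivAt_integral_of_dominated_loc_of_deriv_le
    (bound := fun _ => C) (Metric.ball_mem_nhds t one_pos)
    (.of_forall fun t => (hslice t).aestronglyMeasurable) ((hslice t).intervalIntegrable a b)
    (hf'.comp (Continuous.prodMk_right t)).aestronglyMeasurable ?_ intervalIntegrable_const
    (.of_forall fun s _ t _ => (hf.differentiable one_ne_zero (t, s)).hasDerivAt_slice_fst)).2
  exact .of_forall fun s hs t' ht' =>
    hC (t', s) ⟨Metric.ball_subset_closedBall ht', Set.uIoc_subset_uIcc hs⟩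

theorem integral_fderiv_slice_snd_eq_sub [CompleteSpace F] (hf : ContDiff ℝ 1 f) (t a b : ℝ) :
    ∫ s in a..b, fderiv ℝ f (t, s) (0, 1) = f (t, b) - f (t, a) := by
  have hf' : Continuous fun s => fderiv ℝ f (t, s) (0, 1) :=
    ((hf.continuous_fderiv one_ne_zero).clm_apply continuous_const).comp (.prodMk_right t)
  exact intervalIntegral.integral_eq_sub_of_hasDerivAt
    (fun s _ => (hf.differentiable one_ne_zero (t, s)).hasDerivAt_slice_snd)
    (hf'.intervalIntegrable a b)

end Slices

theorem integral_inner_gradient_eq_sub {E : Type*} [NormedAddCommGroup E] [InnerProductSpace ℝ E]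
    [CompleteSpace E] {S : E → ℝ} (hS : ContDiff ℝ 1 S) {γ : ℝ → E} (hγ : ContDiff ℝ 1 γ)
    (a b : ℝ) : ∫ s in a..b, ⟪gradient S (γ s), deriv γ s⟫ = S (γ b) - S (γ a) := by
  have hcont : Continuous fun s => fderiv ℝ S (γ s) (deriv γ s) :=
    ((hS.continuous_fderiv one_ne_zero).comp hγ.continuous).clm_apply (hγ.continuous_deriv le_rfl)
  simp only [inner_gradient_left]
  exact intervalIntegral.integral_eq_sub_of_hasDerivAt
    (fun s _ => (hS.differentiable one_ne_zero (γ s)).hasFDerivAt.comp_hasDerivAt s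
      (hγ.differentiable one_ne_zero s).hasDerivAt)
    (hcont.intervalIntegrable a b)

section Liouville

variable {V E : Type*} [NormedAddCommGroup V] [NormedSpace ℝ V]
  [NormedAddCommGroup E] [InnerProductSpace ℝ E] (J : E →L[ℝ] E) {f : V → E}

noncomputable def liouvilleForm (f : V → E) (q v : V) : ℝ :=
  1 / 2 * ⟪J (fderiv ℝ f q v), f q⟫

variable {J}

theorem contDiff_liouvilleForm (hf : ContDiff ℝ 2 f) (v : V) :
    ContDiff ℝ 1 (liouvilleForm J f · v) :=
  contDiff_const.mul ((J.contDiff.comp ((hf.fderiv_right one_add_one_eq_two.le).clm_apply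
    contDiff_const)).inner ℝ (hf.of_le one_le_two))

theorem fderiv_liouvilleForm (hf : ContDiff ℝ 2 f) (p v w : V) :
    fderiv ℝ (liouvilleForm J f · v) p w =
      1 / 2 * (⟪J (fderiv ℝ (fderiv ℝ f) p w v), f p⟫ + ⟪J (fderiv ℝ f p v), fderiv ℝ f p w⟫) := by
  have hD : HasFDerivAt (fderiv ℝ f) (fderiv ℝ (fderiv ℝ f) p) p :=
    ((hf.fderiv_right one_add_one_eq_two.le).differentiable one_ne_zero p).hasFDerivAt
  have hDv := J.hasFDerivAt.comp p (hD.clm_apply (hasFDerivAt_const v p))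
  have hL : HasFDerivAt (liouvilleForm J f · v) _ p :=
    (hDv.inner ℝ (hf.differentiable two_ne_zero p).hasFDerivAt).const_mul (1 / 2 : ℝ)
  rw [hL.fderiv]
  simp only [Function.comp_apply, ContinuousLinearMap.comp_zero, zero_add, _root_.smul_apply,
    ContinuousLinearMap.comp_apply, ContinuousLinearMap.prod_apply, ContinuousLinearMap.flip_apply,
    fderivInnerCLM_apply, smul_eq_mul]
  ring

theorem fderiv_liouvilleForm_sub (hf : ContDiff ℝ 2 f) (hJ : ∀ u w, ⟪J u, w⟫ = -⟪u, J w⟫)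
    (p v w : V) :
    fderiv ℝ (liouvilleForm J f · v) p w - fderiv ℝ (liouvilleForm J f · w) p v =
      ⟪J (fderiv ℝ f p v), fderiv ℝ f p w⟫ := by
  have hsymm : fderiv ℝ (fderiv ℝ f) p w v = fderiv ℝ (fderiv ℝ f) p v w :=
    (hf.contDiffAt.isSymmSndFDerivAt (by simp)).eq w v
  rw [fderiv_liouvilleForm hf, fderiv_liouvilleForm hf, hsymm, hJ (fderiv ℝ f p w),
    real_inner_comm (fderiv ℝ f p w)]
  ring

end Liouville

section Loops

variable {E : Type*} [NormedAddCommGroup E] [InnerProductSpace ℝ E] {Φ : ℝ → ℝ → E}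

theorem intervalIntegrable_inner_deriv_slices (hΦ : ContDiff ℝ 1 (uncurry Φ)) (J : E →L[ℝ] E)
    (t a b : ℝ) :
    IntervalIntegrable (fun s => ⟪J (deriv (Φ t) s), deriv (fun t => Φ t s) t⟫)
      MeasureTheory.volume a b := by
  have hΦ' := hΦ.differentiable one_ne_zero
  have hD := (hΦ.continuous_fderiv one_ne_zero).comp (Continuous.prodMk_right t)
  have hΦt : ∀ s, deriv (fun t => Φ t s) t = fderiv ℝ (uncurry Φ) (t, s) (1, 0) :=
    fun s => (hΦ' (t, s)).hasDerivAt_slice_fst.deriv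
  have hΦs : ∀ s, deriv (Φ t) s = fderiv ℝ (uncurry Φ) (t, s) (0, 1) :=
    fun s => (hΦ' (t, s)).hasDerivAt_slice_snd.deriv
  simp only [hΦt, hΦs]
  exact ((J.continuous.comp (hD.clm_apply continuous_const)).inner
    (hD.clm_apply continuous_const)).intervalIntegrable a b

theorem hasDerivAt_integral_half_inner_skew (hΦ : ContDiff ℝ 2 (uncurry Φ)) {J : E →L[ℝ] E}
    (hJ : ∀ u w, ⟪J u, w⟫ = -⟪u, J w⟫) {a b : ℝ} (hloop : ∀ t, Φ t a = Φ t b) (t : ℝ) :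
    HasDerivAt (fun t => ∫ s in a..b, 1 / 2 * ⟪J (deriv (Φ t) s), Φ t s⟫)
      (∫ s in a..b, ⟪J (deriv (Φ t) s), deriv (fun t => Φ t s) t⟫) t := by
  set f := uncurry Φ
  have hf := hΦ.differentiable two_ne_zero
  have hΦt : ∀ t s, deriv (fun t => Φ t s) t = fderiv ℝ f (t, s) (1, 0) :=
    fun t s => (hf (t, s)).hasDerivAt_slice_fst.deriv
  have hΦs : ∀ t s, deriv (Φ t) s = fderiv ℝ f (t, s) (0, 1) :=
    fun t s => (hf (t, s)).hasDerivAt_slice_snd.deriv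
  have hform := contDiff_liouvilleForm (J := J) hΦ (1, 0)
  have hsplit : ∀ s, fderiv ℝ (liouvilleForm J f · (0, 1)) (t, s) (1, 0) =
      ⟪J (fderiv ℝ f (t, s) (0, 1)), fderiv ℝ f (t, s) (1, 0)⟫ +
        fderiv ℝ (liouvilleForm J f · (1, 0)) (t, s) (0, 1) :=
    fun s => eq_add_of_sub_eq (fderiv_liouvilleForm_sub hΦ hJ (t, s) (0, 1) (1, 0))
  have hperiodic : liouvilleForm J f (t, b) (1, 0) = liouvilleForm J f (t, a) (1, 0) := by
    simp only [liouvilleForm, ← hΦt, f, uncurry_apply_pair, ← hloop]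
  have hform' : Continuous fun s => fderiv ℝ (liouvilleForm J f · (1, 0)) (t, s) (0, 1) :=
    ((hform.continuous_fderiv one_ne_zero).clm_apply continuous_const).comp (.prodMk_right t)
  have hint := intervalIntegrable_inner_deriv_slices (hΦ.of_le one_le_two) J t a b
  simp only [hΦt, hΦs] at hint ⊢
  have hderiv :=
    hasDerivAt_intervalIntegral_of_contDiff (contDiff_liouvilleForm (J := J) hΦ (0, 1)) a b t
  rw [intervalIntegral.integral_congr fun s _ => hsplit s,
    intervalIntegral.integral_add hint (hform'.intervalIntegrable a b),
    integral_fderiv_slice_snd_eq_sub hform, hperiodic, sub_self, add_zero] at hderiv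
  exact hderiv

end Loops

theorem stmt6 (N : ℕ) (J K : Matrix (Fin N) (Fin N) ℝ)
    (hJ : Jᵀ = -J) (hK : Kᵀ = -K)
    (S : EuclideanSpace ℝ (Fin N) → ℝ) (hS : ContDiff ℝ 1 S)
    (Z : ℝ → ℝ → ℝ → EuclideanSpace ℝ (Fin N))
    (hZ : ContDiff ℝ 2 (fun p : ℝ × ℝ × ℝ => Z p.1 p.2.1 p.2.2))
    (hper : ∀ x y s : ℝ, Z x y (s + 2 * Real.pi) = Z x y s)
    (heq : ∀ x y s : ℝ,
      Matrix.toEuclideanLin J (deriv (fun x' => Z x' y s) x)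
        + Matrix.toEuclideanLin K (deriv (fun y' => Z x y' s) y)
        = gradient S (Z x y s)) :
    ∀ x y : ℝ,
      deriv (fun x' => (1 / (2 * Real.pi)) * ∫ s in (0:ℝ)..(2 * Real.pi),
          (1 / 2 : ℝ) * ⟪Matrix.toEuclideanLin J (deriv (fun s' => Z x' y s') s), Z x' y s⟫) x
      + deriv (fun y' => (1 / (2 * Real.pi)) * ∫ s in (0:ℝ)..(2 * Real.pi),
          (1 / 2 : ℝ) * ⟪Matrix.toEuclideanLin K (deriv (fun s' => Z x y' s') s), Z x y' s⟫) y
      = 0 := by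
  intro x y
  have hZx : ContDiff ℝ 2 (uncurry fun t s => Z t y s) :=
    hZ.comp (contDiff_fst.prodMk (contDiff_const.prodMk contDiff_snd))
  have hZy : ContDiff ℝ 2 (uncurry fun t s => Z x t s) :=
    hZ.comp (contDiff_const.prodMk (contDiff_fst.prodMk contDiff_snd))
  have hZs : ContDiff ℝ 1 (Z x y) :=
    (hZ.comp (contDiff_const.prodMk (contDiff_const.prodMk contDiff_id))).of_le one_le_two
  have hloop : ∀ x y, Z x y 0 = Z x y (2 * Real.pi) := fun x y => by simpa using (hper x y 0).symm
  have hB := (hasDerivAt_integral_half_inner_skew (J := (toEuclideanLin J).toContinuousLinearMap)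
    hZx (inner_toEuclideanLin_eq_neg hJ) (fun t => hloop t y) x).const_mul (1 / (2 * Real.pi))
  have hA := (hasDerivAt_integral_half_inner_skew (J := (toEuclideanLin K).toContinuousLinearMap)
    hZy (inner_toEuclideanLin_eq_neg hK) (hloop x) y).const_mul (1 / (2 * Real.pi))
  have hflux : ∀ s, ⟪toEuclideanLin J (deriv (Z x y) s), deriv (fun t => Z t y s) x⟫ +
      ⟪toEuclideanLin K (deriv (Z x y) s), deriv (fun t => Z x t s) y⟫ =
        -⟪gradient S (Z x y s), deriv (Z x y) s⟫ := fun s => by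
    rw [inner_toEuclideanLin_eq_neg hJ, inner_toEuclideanLin_eq_neg hK, ← heq,
      real_inner_comm (deriv (Z x y) s), inner_add_right]
    ring
  have hIB := intervalIntegrable_inner_deriv_slices (hZx.of_le one_le_two)
    (toEuclideanLin J).toContinuousLinearMap x 0 (2 * Real.pi)
  have hIA := intervalIntegrable_inner_deriv_slices (hZy.of_le one_le_two)
    (toEuclideanLin K).toContinuousLinearMap y 0 (2 * Real.pi)
  simp only [LinearMap.coe_toContinuousLinearMap'] at hB hA hIB hIA
  rw [hB.deriv, hA.deriv, ← mul_add, ← intervalIntegral.integral_add hIB hIA,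
    intervalIntegral.integral_congr fun s _ => hflux s, intervalIntegral.integral_neg,
    integral_inner_gradient_eq_sub hS hZs, ← hloop, sub_self, neg_zero, mul_zero]
end

section
/- Let J and K be skew-symmetric real N×N matrices, let S : ℝᴺ → ℝ be twice continuously differentiable, and let Ẑ : ℝ × ℝ² → ℝᴺ, (θ,k,l) ↦ Ẑ(θ,k,l), be a smooth (C²) map, 2π-periodic in θ, satisfying (k·J + l·K)·Ẑ_θ = ∇S(Ẑ) for all (θ,k,l) in an open set. Then for all (k,l) in that set, (1/2π)∫₀^{2π}⟨J·Ẑ_θ, Ẑ_l⟩dθ = (1/2π)∫₀^{2π}⟨K·Ẑ_θ, Ẑ_k⟩dθ; i.e., the cross derivatives of the flux functionals agree: B_l = A_k. -/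
/-!
Write `M = k J + l K`. Differentiating the pattern equation `M Z_θ = ∇S(Z)` in `k` and in `l`
gives `J Z_θ + M Z_θk = D²S(Z) Z_k` and `K Z_θ + M Z_θl = D²S(Z) Z_l`. Pair the first with `Z_l`,
the second with `Z_k` and subtract: the Hessian terms cancel because `D²S` is symmetric, and since
`M` is skew-symmetric and `Z_θk = Z_kθ`, what remains is
`⟪J Z_θ, Z_l⟫ - ⟪K Z_θ, Z_k⟫ = ∂_θ ⟪M Z_l, Z_k⟫`.
The right-hand side is the derivative of a `2π`-periodic function, so its integral over a period
vanishes.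
-/

open RealInnerProductSpace Matrix

theorem ContinuousLinearMap.inner_apply_eq_neg_of_mem_skewAdjoint
    {E : Type*} [NormedAddCommGroup E] [InnerProductSpace ℝ E] [CompleteSpace E]
    {A : E →L[ℝ] E} (hA : A ∈ skewAdjoint (E →L[ℝ] E)) (x y : E) :
    ⟪A x, y⟫ = -⟪x, A y⟫ := by
  rw [← adjoint_inner_right, ← star_eq_adjoint, skewAdjoint.mem_iff.mp hA, _root_.neg_apply,
    inner_neg_right]

theorem Matrix.toEuclideanCLM_mem_skewAdjoint {n : Type*} [Fintype n] [DecidableEq n]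
    {A : Matrix n n ℝ} (hA : Aᵀ = -A) : toEuclideanCLM (𝕜 := ℝ) A ∈ skewAdjoint _ := by
  rw [skewAdjoint.mem_iff, ← map_star, star_eq_conjTranspose,
    conjTranspose_eq_transpose_of_trivial, hA, map_neg]

section Partials

variable {𝕜 F : Type*} [NontriviallyNormedField 𝕜] [NormedAddCommGroup F] [NormedSpace 𝕜 F]
  {g : 𝕜 × 𝕜 × 𝕜 → F} {g' : 𝕜 × 𝕜 × 𝕜 →L[𝕜] F} {θ k l : 𝕜}

theorem HasFDerivAt.hasDerivAt_partial₁ (h : HasFDerivAt g g' (θ, k, l)) :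
    HasDerivAt (fun t => g (t, k, l)) (g' (1, 0, 0)) θ :=
  h.comp_hasDerivAt θ <| (hasDerivAt_id θ).prodMk <|
    (hasDerivAt_const θ k).prodMk (hasDerivAt_const θ l)

theorem HasFDerivAt.hasDerivAt_partial₂ (h : HasFDerivAt g g' (θ, k, l)) :
    HasDerivAt (fun t => g (θ, t, l)) (g' (0, 1, 0)) k :=
  h.comp_hasDerivAt k <| (hasDerivAt_const k θ).prodMk <|
    (hasDerivAt_id k).prodMk (hasDerivAt_const k l)

theorem HasFDerivAt.hasDerivAt_partial₃ (h : HasFDerivAt g g' (θ, k, l)) :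
    HasDerivAt (fun t => g (θ, k, t)) (g' (0, 0, 1)) l :=
  h.comp_hasDerivAt l <| (hasDerivAt_const l θ).prodMk <|
    (hasDerivAt_const l k).prodMk (hasDerivAt_id l)

end Partials

theorem fderiv_add_eq_of_forall_add_eq {𝕜 F G : Type*} [NontriviallyNormedField 𝕜]
    [NormedAddCommGroup F] [NormedSpace 𝕜 F] [NormedAddCommGroup G] [NormedSpace 𝕜 G]
    {f : F → G} {a : F} (h : ∀ x, f (x + a) = f x) (x : F) :
    fderiv 𝕜 f (x + a) = fderiv 𝕜 f x := by
  rw [← fderiv_comp_add_right, funext h]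

section PatternEquation

variable {E : Type*} [NormedAddCommGroup E] [InnerProductSpace ℝ E] [CompleteSpace E]
  {J K : E →L[ℝ] E} {S : E → ℝ} {U : Set (ℝ × ℝ)} {Z : ℝ × ℝ × ℝ → E}

/-- The basic periodic pattern equation `(k J + l K) Z_θ = ∇S(Z)`, with `p = (θ, k, l)`. -/
def SolvesPatternEquation (J K : E →L[ℝ] E) (S : E → ℝ) (U : Set (ℝ × ℝ))
    (Z : ℝ × ℝ × ℝ → E) : Prop :=
  ∀ p : ℝ × ℝ × ℝ, p.2 ∈ U → (p.2.1 • J + p.2.2 • K) (fderiv ℝ Z p (1, 0, 0)) = gradient S (Z p)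

theorem SolvesPatternEquation.inner_fderiv_eq (heq : SolvesPatternEquation J K S U Z)
    (hS : ContDiff ℝ 2 S) (hZ : ContDiff ℝ 2 Z) (hU : IsOpen U)
    {p : ℝ × ℝ × ℝ} (hp : p.2 ∈ U) (v : ℝ × ℝ × ℝ) (c : E) :
    ⟪(p.2.1 • J + p.2.2 • K) (fderiv ℝ (fderiv ℝ Z) p v (1, 0, 0))
        + (v.2.1 • J + v.2.2 • K) (fderiv ℝ Z p (1, 0, 0)), c⟫
      = fderiv ℝ (fderiv ℝ S) (Z p) (fderiv ℝ Z p v) c := by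
  have hD2Z : HasFDerivAt (fderiv ℝ Z) (fderiv ℝ (fderiv ℝ Z) p) p :=
    ((hZ.fderiv_right (m := 1) le_rfl).differentiable one_ne_zero p).hasFDerivAt
  have hD2S : HasFDerivAt (fderiv ℝ S) (fderiv ℝ (fderiv ℝ S) (Z p)) (Z p) :=
    ((hS.fderiv_right (m := 1) le_rfl).differentiable one_ne_zero _).hasFDerivAt
  have hsnd := hasFDerivAt_snd (𝕜 := ℝ) (E := ℝ) (F := ℝ × ℝ) (p := p)
  have hM := (hsnd.fst.smul_const J).add (hsnd.snd.smul_const K)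
  have hlhs := (hM.clm_apply (hD2Z.clm_apply (hasFDerivAt_const (1, 0, 0) p))).inner ℝ
    (hasFDerivAt_const c p)
  have hrhs := (hD2S.comp p (hZ.differentiable two_ne_zero p).hasFDerivAt).clm_apply
    (hasFDerivAt_const c p)
  have hev : (fun q : ℝ × ℝ × ℝ => ⟪(q.2.1 • J + q.2.2 • K) (fderiv ℝ Z q (1, 0, 0)), c⟫)
      =ᶠ[nhds p] fun q => fderiv ℝ S (Z q) c := by
    filter_upwards [continuous_snd.continuousAt.preimage_mem_nhds (hU.mem_nhds hp)] with q hq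
    rw [heq q hq]
    exact InnerProductSpace.toDual_symm_apply
  simpa using congrArg (· v) ((hlhs.congr_of_eventuallyEq hev.symm).unique hrhs)

theorem SolvesPatternEquation.inner_sub_inner_eq (heq : SolvesPatternEquation J K S U Z)
    (hJ : J ∈ skewAdjoint (E →L[ℝ] E)) (hK : K ∈ skewAdjoint (E →L[ℝ] E))
    (hS : ContDiff ℝ 2 S) (hZ : ContDiff ℝ 2 Z) (hU : IsOpen U)
    {p : ℝ × ℝ × ℝ} (hp : p.2 ∈ U) :
    ⟪J (fderiv ℝ Z p (1, 0, 0)), fderiv ℝ Z p (0, 0, 1)⟫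
        - ⟪K (fderiv ℝ Z p (1, 0, 0)), fderiv ℝ Z p (0, 1, 0)⟫
      = ⟪(p.2.1 • J + p.2.2 • K) (fderiv ℝ Z p (0, 0, 1)),
            fderiv ℝ (fderiv ℝ Z) p (1, 0, 0) (0, 1, 0)⟫
        + ⟪(p.2.1 • J + p.2.2 • K) (fderiv ℝ (fderiv ℝ Z) p (1, 0, 0) (0, 0, 1)),
            fderiv ℝ Z p (0, 1, 0)⟫ := by
  have hM : p.2.1 • J + p.2.2 • K ∈ skewAdjoint (E →L[ℝ] E) :=
    add_mem (skewAdjoint.smul_mem _ hJ) (skewAdjoint.smul_mem _ hK)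
  have h_k := heq.inner_fderiv_eq hS hZ hU hp (0, 1, 0) (fderiv ℝ Z p (0, 0, 1))
  have h_l := heq.inner_fderiv_eq hS hZ hU hp (0, 0, 1) (fderiv ℝ Z p (0, 1, 0))
  have hS_symm := hS.contDiffAt.isSymmSndFDerivAt (x := Z p) (by simp)
    (fderiv ℝ Z p (0, 1, 0)) (fderiv ℝ Z p (0, 0, 1))
  have hZ_symm := hZ.contDiffAt.isSymmSndFDerivAt (x := p) (by simp)
  rw [hZ_symm (0, 1, 0), hS_symm] at h_k
  rw [hZ_symm (0, 0, 1)] at h_l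
  rw [ContinuousLinearMap.inner_apply_eq_neg_of_mem_skewAdjoint hM (fderiv ℝ Z p (0, 0, 1))]
  simp only [inner_add_left, zero_smul, one_smul, zero_add, add_zero] at h_k h_l
  linarith [real_inner_comm (fderiv ℝ Z p (0, 0, 1))
    ((p.2.1 • J + p.2.2 • K) (fderiv ℝ (fderiv ℝ Z) p (1, 0, 0) (0, 1, 0)))]

theorem SolvesPatternEquation.integral_inner_eq (heq : SolvesPatternEquation J K S U Z)
    (hJ : J ∈ skewAdjoint (E →L[ℝ] E)) (hK : K ∈ skewAdjoint (E →L[ℝ] E))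
    (hS : ContDiff ℝ 2 S) (hZ : ContDiff ℝ 2 Z) (hU : IsOpen U) {T : ℝ}
    (hper : ∀ p : ℝ × ℝ × ℝ, Z (p + (T, 0, 0)) = Z p) {k l : ℝ} (hkl : (k, l) ∈ U) :
    ∫ θ in 0..T, ⟪J (fderiv ℝ Z (θ, k, l) (1, 0, 0)), fderiv ℝ Z (θ, k, l) (0, 0, 1)⟫
      = ∫ θ in 0..T, ⟪K (fderiv ℝ Z (θ, k, l) (1, 0, 0)), fderiv ℝ Z (θ, k, l) (0, 1, 0)⟫ := by
  set M := k • J + l • K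
  set G : ℝ → ℝ := fun θ => ⟪M (fderiv ℝ Z (θ, k, l) (0, 0, 1)), fderiv ℝ Z (θ, k, l) (0, 1, 0)⟫
  have hDZ : Continuous (fderiv ℝ Z) := hZ.continuous_fderiv two_ne_zero
  have hJ_cont : Continuous fun θ : ℝ =>
      ⟪J (fderiv ℝ Z (θ, k, l) (1, 0, 0)), fderiv ℝ Z (θ, k, l) (0, 0, 1)⟫ := by
    fun_prop
  have hK_cont : Continuous fun θ : ℝ =>
      ⟪K (fderiv ℝ Z (θ, k, l) (1, 0, 0)), fderiv ℝ Z (θ, k, l) (0, 1, 0)⟫ := by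
    fun_prop
  have hG (θ : ℝ) : HasDerivAt G
      (⟪J (fderiv ℝ Z (θ, k, l) (1, 0, 0)), fderiv ℝ Z (θ, k, l) (0, 0, 1)⟫
        - ⟪K (fderiv ℝ Z (θ, k, l) (1, 0, 0)), fderiv ℝ Z (θ, k, l) (0, 1, 0)⟫) θ := by
    rw [heq.inner_sub_inner_eq hJ hK hS hZ hU (p := (θ, k, l)) hkl]
    have hZθ := ((hZ.fderiv_right (m := 1) le_rfl).differentiable one_ne_zero
      (θ, k, l)).hasFDerivAt.hasDerivAt_partial₁
    have hZθl := hZθ.clm_apply (hasDerivAt_const θ ((0, 0, 1) : ℝ × ℝ × ℝ))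
    have hZθk := hZθ.clm_apply (hasDerivAt_const θ ((0, 1, 0) : ℝ × ℝ × ℝ))
    simp only [map_zero, add_zero] at hZθl hZθk
    exact (M.hasFDerivAt.comp_hasDerivAt θ hZθl).inner ℝ hZθk
  have hG_periodic : G T = G 0 := by
    have h := fderiv_add_eq_of_forall_add_eq (𝕜 := ℝ) hper (0, k, l)
    simp only [Prod.mk_add_mk, zero_add, add_zero] at h
    simp only [G, h]
  rw [← sub_eq_zero, ← intervalIntegral.integral_sub (hJ_cont.intervalIntegrable _ _)
    (hK_cont.intervalIntegrable _ _), intervalIntegral.integral_eq_sub_of_hasDerivAt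
    (fun θ _ => hG θ) ((hJ_cont.sub hK_cont).intervalIntegrable _ _), hG_periodic, sub_self]

end PatternEquation

theorem stmt9 (N : ℕ) (J K : Matrix (Fin N) (Fin N) ℝ)
    (hJ : Jᵀ = -J) (hK : Kᵀ = -K)
    (S : EuclideanSpace ℝ (Fin N) → ℝ) (hS : ContDiff ℝ 2 S)
    (U : Set (ℝ × ℝ)) (hU : IsOpen U)
    (Zh : ℝ → ℝ → ℝ → EuclideanSpace ℝ (Fin N))
    (hZ : ContDiff ℝ 2 (fun p : ℝ × ℝ × ℝ => Zh p.1 p.2.1 p.2.2))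
    (hper : ∀ θ k l : ℝ, Zh (θ + 2 * Real.pi) k l = Zh θ k l)
    (heq : ∀ θ k l : ℝ, (k, l) ∈ U →
      Matrix.toEuclideanLin (k • J + l • K) (deriv (fun θ' => Zh θ' k l) θ)
        = gradient S (Zh θ k l)) :
    ∀ k l : ℝ, (k, l) ∈ U →
      ((1 / (2 * Real.pi)) * ∫ θ in (0:ℝ)..(2 * Real.pi),
          ⟪Matrix.toEuclideanLin J (deriv (fun θ' => Zh θ' k l) θ),
            deriv (fun l' => Zh θ k l') l⟫)
        = (1 / (2 * Real.pi)) * ∫ θ in (0:ℝ)..(2 * Real.pi),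
            ⟪Matrix.toEuclideanLin K (deriv (fun θ' => Zh θ' k l) θ),
              deriv (fun k' => Zh θ k' l) k⟫ := by
  intro k l hkl
  let Z : ℝ × ℝ × ℝ → EuclideanSpace ℝ (Fin N) := fun p => Zh p.1 p.2.1 p.2.2
  have hDZ (θ k l : ℝ) : HasFDerivAt Z (fderiv ℝ Z (θ, k, l)) (θ, k, l) :=
    (hZ.differentiable two_ne_zero _).hasFDerivAt
  have hZθ (θ k l : ℝ) : deriv (fun t => Zh t k l) θ = fderiv ℝ Z (θ, k, l) (1, 0, 0) :=
    (hDZ θ k l).hasDerivAt_partial₁.deriv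
  have hZk (θ k l : ℝ) : deriv (fun t => Zh θ t l) k = fderiv ℝ Z (θ, k, l) (0, 1, 0) :=
    (hDZ θ k l).hasDerivAt_partial₂.deriv
  have hZl (θ k l : ℝ) : deriv (fun t => Zh θ k t) l = fderiv ℝ Z (θ, k, l) (0, 0, 1) :=
    (hDZ θ k l).hasDerivAt_partial₃.deriv
  have hsol : SolvesPatternEquation (toEuclideanCLM (𝕜 := ℝ) J) (toEuclideanCLM (𝕜 := ℝ) K)
      S U Z := by
    rintro ⟨θ, k, l⟩ hp
    simpa [hZθ, ← coe_toEuclideanCLM_eq_toEuclideanLin] using heq θ k l hp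
  have hZ_periodic (p : ℝ × ℝ × ℝ) : Z (p + (2 * Real.pi, 0, 0)) = Z p := by
    simp [Z, hper]
  have h := hsol.integral_inner_eq (toEuclideanCLM_mem_skewAdjoint hJ)
    (toEuclideanCLM_mem_skewAdjoint hK) hS hZ hU hZ_periodic hkl
  simp only [hZθ, hZk, hZl, ← coe_toEuclideanCLM_eq_toEuclideanLin, ContinuousLinearMap.coe_coe]
  rw [h]
end

section
/- Let V be a finite-dimensional real inner product space, let L : V → V be self-adjoint, let S : V → V be skew-adjoint, and suppose ξ₁, ξ₂, ξ₃ ∈ V satisfy the Jordan chain relations L ξ₁ = 0, L ξ₂ = S ξ₁, L ξ₃ = S ξ₂. Then ⟨ξ₁, S ξ₃⟩ = 0. Consequently, if moreover the kernel of L is spanned by ξ₁, then there exists ξ₄ ∈ V with L ξ₄ = S ξ₃; i.e., the twisted Jordan chain extends to length four. -/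
/-!
Skew-adjointness makes `⟪x, S x⟫` vanish, and moving `S` and `L` across the inner product along
the chain gives `⟪ξ₁, S ξ₃⟫ = -⟪S ξ₁, ξ₃⟫ = -⟪L ξ₂, ξ₃⟫ = -⟪ξ₂, L ξ₃⟫ = -⟪ξ₂, S ξ₂⟫ = 0`.
Hence `S ξ₃ ⊥ ξ₁`, and when `ker L = ℝ ξ₁` this says `S ξ₃ ∈ (ker L)ᗮ = range L`.
-/

open RealInnerProductSpace

theorem LinearMap.IsSymmetric.range_eq_orthogonal_ker {𝕜 E : Type*} [RCLike 𝕜]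
    [NormedAddCommGroup E] [InnerProductSpace 𝕜 E] [FiniteDimensional 𝕜 E]
    {T : E →ₗ[𝕜] E} (hT : T.IsSymmetric) : LinearMap.range T = (LinearMap.ker T)ᗮ := by
  rw [← hT.orthogonal_range, Submodule.orthogonal_orthogonal]

section SkewAdjoint

variable {V : Type*} [NormedAddCommGroup V] [InnerProductSpace ℝ V]

theorem inner_self_apply_eq_zero_of_skew {S : V →ₗ[ℝ] V} (hS : ∀ u v : V, ⟪S u, v⟫ = -⟪u, S v⟫)
    (x : V) : ⟪x, S x⟫ = 0 := by
  have h := hS x x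
  rw [real_inner_comm] at h
  linarith

theorem inner_apply_eq_zero_of_twisted_chain {L S : V →ₗ[ℝ] V} (hL : L.IsSymmetric)
    (hS : ∀ u v : V, ⟪S u, v⟫ = -⟪u, S v⟫) {ξ₁ ξ₂ ξ₃ : V}
    (h2 : L ξ₂ = S ξ₁) (h3 : L ξ₃ = S ξ₂) : ⟪ξ₁, S ξ₃⟫ = 0 := by
  calc ⟪ξ₁, S ξ₃⟫ = -⟪S ξ₁, ξ₃⟫ := by rw [hS, neg_neg]
    _ = -⟪ξ₂, S ξ₂⟫ := by rw [← h2, hL, h3]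
    _ = 0 := by rw [inner_self_apply_eq_zero_of_skew hS, neg_zero]

end SkewAdjoint

theorem stmt11_general (V : Type*) [NormedAddCommGroup V] [InnerProductSpace ℝ V]
    [FiniteDimensional ℝ V]
    (L S : V →ₗ[ℝ] V)
    (hL : ∀ u v : V, ⟪L u, v⟫ = ⟪u, L v⟫)
    (hS : ∀ u v : V, ⟪S u, v⟫ = -⟪u, S v⟫)
    (ξ₁ ξ₂ ξ₃ : V)
    (h2 : L ξ₂ = S ξ₁) (h3 : L ξ₃ = S ξ₂) :
    ⟪ξ₁, S ξ₃⟫ = 0 ∧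
      (LinearMap.ker L = Submodule.span ℝ {ξ₁} → ∃ ξ₄ : V, L ξ₄ = S ξ₃) := by
  have hL : L.IsSymmetric := hL
  have horth : ⟪ξ₁, S ξ₃⟫ = 0 := inner_apply_eq_zero_of_twisted_chain hL hS h2 h3
  refine ⟨horth, fun hker => ?_⟩
  rw [← LinearMap.mem_range, hL.range_eq_orthogonal_ker, hker]
  exact Submodule.mem_orthogonal_singleton_iff_inner_right.mpr horth

theorem stmt11 (V : Type*) [NormedAddCommGroup V] [InnerProductSpace ℝ V]
    [FiniteDimensional ℝ V]
    (L S : V →ₗ[ℝ] V)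
    (hL : ∀ u v : V, ⟪L u, v⟫ = ⟪u, L v⟫)
    (hS : ∀ u v : V, ⟪S u, v⟫ = -⟪u, S v⟫)
    (ξ₁ ξ₂ ξ₃ : V)
    (h1 : L ξ₁ = 0) (h2 : L ξ₂ = S ξ₁) (h3 : L ξ₃ = S ξ₂) :
    ⟪ξ₁, S ξ₃⟫ = 0 ∧
      (LinearMap.ker L = Submodule.span ℝ {ξ₁} → ∃ ξ₄ : V, L ξ₄ = S ξ₃) :=
  stmt11_general V L S hL hS ξ₁ ξ₂ ξ₃ h2 h3
end

section
/- Let k, l ∈ ℝ satisfy 1/3 < k² + l² < 1, and let C ∈ ℝ be any root of the characteristic quadratic for the real Ginzburg–Landau rolls, (1 − k² − 3l²)·C² − 4kl·C + (1 − 3k² − l²) = 0. Then k + C·l ≠ 0, and consequently the regularization coefficient 𝒦 = −(1 + C²)·(k + C·l)²/(1 − k² − l²) is strictly negative; i.e., the fourth-derivative term of the characteristic Cross–Newell equation is regularizing for the Ginzburg–Landau rolls throughout the annulus. -/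
/-!
The characteristic quadratic is `(1 + C²)(1 - k² - l²) - 2(k + C l)²`, so at a root
`2(k + C l)² = (1 + C²)(1 - k² - l²)`, which is positive inside the unit disc, and then
`𝒦 = -(1 + C²)² / 2`.
-/

theorem rollCharQuadratic_eq {R : Type*} [CommRing R] (k l C : R) :
    (1 - k ^ 2 - 3 * l ^ 2) * C ^ 2 - 4 * k * l * C + (1 - 3 * k ^ 2 - l ^ 2) =
      (1 + C ^ 2) * (1 - k ^ 2 - l ^ 2) - 2 * (k + C * l) ^ 2 := by
  ring

theorem two_mul_sq_eq_of_rollCharQuadratic_eq_zero {R : Type*} [CommRing R] {k l C : R}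
    (hC : (1 - k ^ 2 - 3 * l ^ 2) * C ^ 2 - 4 * k * l * C + (1 - 3 * k ^ 2 - l ^ 2) = 0) :
    2 * (k + C * l) ^ 2 = (1 + C ^ 2) * (1 - k ^ 2 - l ^ 2) := by
  rw [rollCharQuadratic_eq] at hC
  exact (sub_eq_zero.mp hC).symm

theorem stmt16_general (k l C : ℝ) (h2 : k ^ 2 + l ^ 2 < 1)
    (hC : (1 - k ^ 2 - 3 * l ^ 2) * C ^ 2 - 4 * k * l * C + (1 - 3 * k ^ 2 - l ^ 2) = 0) :
    k + C * l ≠ 0 ∧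
      -(1 + C ^ 2) * (k + C * l) ^ 2 / (1 - k ^ 2 - l ^ 2) < 0 := by
  have hgap : 0 < 1 - k ^ 2 - l ^ 2 := by linarith
  have hsq := two_mul_sq_eq_of_rollCharQuadratic_eq_zero hC
  have hrhs : 0 < (1 + C ^ 2) * (1 - k ^ 2 - l ^ 2) := by positivity
  have hne : k + C * l ≠ 0 := by
    rintro hzero
    rw [hzero] at hsq
    linarith
  refine ⟨hne, ?_⟩
  have hK : -(1 + C ^ 2) * (k + C * l) ^ 2 / (1 - k ^ 2 - l ^ 2) = -(1 + C ^ 2) ^ 2 / 2 := by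
    rw [div_eq_div_iff hgap.ne' two_ne_zero]
    linear_combination -(1 + C ^ 2) * hsq
  rw [hK]
  exact div_neg_of_neg_of_pos (neg_neg_of_pos (by positivity)) two_pos

theorem stmt16 (k l C : ℝ) (h1 : 1 / 3 < k ^ 2 + l ^ 2) (h2 : k ^ 2 + l ^ 2 < 1)
    (hC : (1 - k ^ 2 - 3 * l ^ 2) * C ^ 2 - 4 * k * l * C + (1 - 3 * k ^ 2 - l ^ 2) = 0) :
    k + C * l ≠ 0 ∧
      -(1 + C ^ 2) * (k + C * l) ^ 2 / (1 - k ^ 2 - l ^ 2) < 0 :=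
  stmt16_general k l C h2 hC
end
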